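/- For every nonnegative integer n, ∑_{k=0}^{n} (-1)^k q^{k(k-1)} qBinom(2n, n-k)·([2k+1]/[n+k+1])·(1+q^{2k+1})/((-q;q)_{n-k}·(-q;q)_{n+k+1}) equals 1 if n=0 and 0 otherwise, where [m] = (1-q^m)/(1-q). -/

import Mathlib

/-- Gaussian (q-)binomial coefficient, via the q-Pascal recurrence. -/
def qbinom {K : Type*} [CommRing K] (q : K) : ℕ → ℕ → K
  | _, 0 => 1
  | 0, _ + 1 => 0
  | n + 1, k + 1 => qbinom q n k + q ^ (k + 1) * qbinom q n (k + 1)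

/-- q-Pochhammer symbol `(c;q)_r = ∏_{j=0}^{r-1} (1 - c·q^j)`. -/
def qpoch {K : Type*} [CommRing K] (c q : K) (r : ℕ) : K :=
  ∏ j ∈ Finset.range r, (1 - c * q ^ j)

/-- The rational function field `ℚ(q)`. -/
noncomputable abbrev Kq : Type := RatFunc ℚ

/-- The variable `q` of `ℚ(q)`. -/
noncomputable def qv : Kq := RatFunc.X

/-- The q-integer `[m] = (1-q^m)/(1-q)`. -/
noncomputable def qint (m : ℕ) : Kq := (1 - qv ^ m) / (1 - qv)




-- basic qpoch lemmas
lemma qpoch_zero {K : Type*} [CommRing K] (c q : K) : qpoch c q 0 = 1 := by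
  simp [qpoch]

lemma qpoch_succ {K : Type*} [CommRing K] (c q : K) (r : ℕ) :
    qpoch c q (r + 1) = qpoch c q r * (1 - c * q ^ r) := by
  simp [qpoch, Finset.prod_range_succ]

lemma qbinom_zero_right {K : Type*} [CommRing K] (q : K) (n : ℕ) : qbinom q n 0 = 1 := by
  cases n <;> rfl

lemma qbinom_eq_zero {K : Type*} [CommRing K] (q : K) :
    ∀ {n k : ℕ}, n < k → qbinom q n k = 0 := by
  intro n
  induction n with
  | zero => intro k h; match k, h with
      | k + 1, _ => rfl
  | succ m ih =>
      intro k h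
      match k, h with
      | k + 1, h =>
        have h1 : m < k := by omega
        have h2 : m < k + 1 := by omega
        show qbinom q m k + q ^ (k+1) * qbinom q m (k+1) = 0
        rw [ih h1, ih h2]; ring

lemma qbinom_self {K : Type*} [CommRing K] (q : K) (n : ℕ) : qbinom q n n = 1 := by
  induction n with
  | zero => rfl
  | succ m ih =>
      show qbinom q m m + q ^ (m+1) * qbinom q m (m+1) = 1
      rw [ih, qbinom_eq_zero q (by omega)]; ring

lemma qbinom_mul_qpoch {K : Type*} [CommRing K] (q : K) :
    ∀ m j : ℕ, j ≤ m →
      qbinom q m j * qpoch q q j * qpoch q q (m - j) = qpoch q q m := by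
  intro m
  induction m with
  | zero => intro j hj; interval_cases j; simp [qbinom_zero_right, qpoch_zero]
  | succ m ih =>
      intro j hj
      match j with
      | 0 => simp [qbinom_zero_right, qpoch_zero]
      | i + 1 =>
        rcases Nat.lt_or_ge i m with hlt | hge
        · obtain ⟨d, rfl⟩ : ∃ d, m = i + 1 + d := ⟨m - i - 1, by omega⟩
          have e1 : i + 1 + d - i = d + 1 := by omega
          have e2 : i + 1 + d + 1 - (i + 1) = d + 1 := by omega
          have h1 := ih i (by omega)
          have h2 := ih (i + 1) (by omega)
          rw [e1, qpoch_succ q q d] at h1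
          have e3 : i + 1 + d - (i + 1) = d := by omega
          rw [e3, qpoch_succ q q i] at h2
          show (qbinom q (i+1+d) i + q ^ (i+1) * qbinom q (i+1+d) (i+1)) *
              qpoch q q (i+1) * qpoch q q (i+1+d+1-(i+1)) = qpoch q q (i+1+d+1)
          rw [e2, qpoch_succ q q (i + 1 + d), qpoch_succ q q i, qpoch_succ q q d]
          linear_combination (1 - q * q ^ i) * h1 + q ^ (i + 1) * (1 - q * q ^ d) * h2
        · have him : i = m := by omega
          subst him
          show (qbinom q i i + q ^ (i+1) * qbinom q i (i+1)) *
              qpoch q q (i+1) * qpoch q q (i+1-(i+1)) = qpoch q q (i+1)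
          rw [qbinom_self, qbinom_eq_zero q (by omega), Nat.sub_self, qpoch_zero]
          ring


lemma one_sub_qv_pow_ne_zero {m : ℕ} (hm : m ≠ 0) : (1 - qv ^ m) ≠ 0 := by
  have : (1 : Kq) - qv ^ m = algebraMap (Polynomial ℚ) Kq (1 - Polynomial.X ^ m) := by
    simp [qv, map_sub, map_pow, RatFunc.algebraMap_X]
  rw [this]
  intro h
  have h2 : (1 - Polynomial.X ^ m : Polynomial ℚ) = 0 :=
    RatFunc.algebraMap_injective ℚ (by simpa using h)
  have h3 : (Polynomial.X ^ m : Polynomial ℚ) = 1 := by linear_combination -h2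
  have := congrArg Polynomial.natDegree h3
  simp [Polynomial.natDegree_X_pow] at this
  exact hm this

lemma one_add_qv_pow_ne_zero (m : ℕ) : (1 + qv ^ m) ≠ 0 := by
  have : (1 : Kq) + qv ^ m = algebraMap (Polynomial ℚ) Kq (1 + Polynomial.X ^ m) := by
    simp [qv, map_add, map_pow, RatFunc.algebraMap_X]
  rw [this]
  intro h
  have h2 : (1 + Polynomial.X ^ m : Polynomial ℚ) = 0 :=
    RatFunc.algebraMap_injective ℚ (by simpa using h)
  rcases Nat.eq_zero_or_pos m with rfl | hmpos
  · norm_num at h2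
  have h3 : (Polynomial.X ^ m : Polynomial ℚ) = -1 := by linear_combination h2
  have := congrArg Polynomial.natDegree h3
  simp [Polynomial.natDegree_X_pow] at this
  omega

lemma qpoch_q_ne_zero (r : ℕ) : qpoch qv qv r ≠ 0 := by
  induction r with
  | zero => rw [qpoch_zero]; norm_num
  | succ s ih =>
      rw [qpoch_succ]
      refine mul_ne_zero ih ?_
      have : (1 : Kq) - qv * qv ^ s = 1 - qv ^ (s + 1) := by ring
      rw [this]
      exact one_sub_qv_pow_ne_zero (by omega)

lemma qpoch_negq_ne_zero (r : ℕ) : qpoch (-1 * qv) qv r ≠ 0 := by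
  induction r with
  | zero => rw [qpoch_zero]; norm_num
  | succ s ih =>
      rw [qpoch_succ]
      refine mul_ne_zero ih ?_
      have : (1 : Kq) - (-1 * qv) * qv ^ s = 1 + qv ^ (s + 1) := by ring
      rw [this]
      exact one_add_qv_pow_ne_zero (s + 1)

lemma one_sub_qv_ne_zero : (1 - qv) ≠ 0 := by
  have := one_sub_qv_pow_ne_zero (m := 1) one_ne_zero
  simpa using this

lemma qint_ne_zero {m : ℕ} (hm : m ≠ 0) : qint m ≠ 0 :=
  div_ne_zero (one_sub_qv_pow_ne_zero hm) one_sub_qv_ne_zero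

lemma one_ne_zero_Kq : (1 : Kq) ≠ 0 := one_ne_zero

lemma qbinom_eq {m j : ℕ} (h : j ≤ m) :
    qbinom qv m j = qpoch qv qv m / (qpoch qv qv j * qpoch qv qv (m - j)) := by
  rw [eq_div_iff (mul_ne_zero (qpoch_q_ne_zero j) (qpoch_q_ne_zero (m - j)))]
  rw [← mul_assoc]
  exact qbinom_mul_qpoch qv m j h

lemma qpoch_negq_succ (r : ℕ) :
    qpoch (-1 * qv) qv (r + 1) = qpoch (-1 * qv) qv r * (1 + qv ^ (r + 1)) := by
  rw [qpoch_succ]; ring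

noncomputable def Fterm (n k : ℕ) : Kq :=
  (-1 : Kq) ^ k * qv ^ (k * (k - 1)) * qbinom qv (2 * n) (n - k)
    * (qint (2 * k + 1) / qint (n + k + 1)) * (1 + qv ^ (2 * k + 1))
    / (qpoch (-1 * qv) qv (n - k) * qpoch (-1 * qv) qv (n + k + 1))

noncomputable def Gterm (n k : ℕ) : Kq :=
  (-1 : Kq) ^ k * qv ^ (k * (k - 1)) * qbinom qv (2 * n) (n - k) * (1 - qv ^ (2 * k))
    / ((1 - qv ^ (2 * n)) * qpoch (-1 * qv) qv (n - k) * qpoch (-1 * qv) qv (n + k))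

lemma qbinom_ratio (k d : ℕ) :
    qbinom qv (2 * k + 2 * d + 2) d
      = qbinom qv (2 * k + 2 * d + 2) (d + 1)
        * ((1 - qv ^ (d + 1)) / (1 - qv ^ (2 * k + d + 1 + 1))) := by
  have hA := qbinom_mul_qpoch qv (2 * k + 2 * d + 2) (d + 1) (by omega)
  have hB := qbinom_mul_qpoch qv (2 * k + 2 * d + 2) d (by omega)
  have e7 : 2 * k + 2 * d + 2 - (d + 1) = 2 * k + d + 1 := by omega
  have e8 : 2 * k + 2 * d + 2 - d = 2 * k + d + 1 + 1 := by omega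
  rw [e7, qpoch_succ qv qv d] at hA
  rw [e8, qpoch_succ qv qv (2 * k + d + 1)] at hB
  have h6 := qpoch_q_ne_zero (2 * k + d + 1)
  have h7 := qpoch_q_ne_zero d
  have h1 : (1 : Kq) - qv ^ (2 * k + d + 1 + 1) ≠ 0 := one_sub_qv_pow_ne_zero (by omega)
  rw [← mul_div_assoc, eq_div_iff h1, mul_comm]
  have key : qbinom qv (2 * k + 2 * d + 2) d * (1 - qv ^ (2 * k + d + 1 + 1))
        * (qpoch qv qv d * qpoch qv qv (2 * k + d + 1))
      = qbinom qv (2 * k + 2 * d + 2) (d + 1) * (1 - qv ^ (d + 1))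
        * (qpoch qv qv d * qpoch qv qv (2 * k + d + 1)) := by
    have p1 : qv * qv ^ (2 * k + d + 1) = qv ^ (2 * k + d + 1 + 1) := by
      rw [pow_succ]; ring
    have p2 : qv * qv ^ d = qv ^ (d + 1) := by rw [pow_succ]; ring
    linear_combination hB - hA + qbinom qv (2*k+2*d+2) d * qpoch qv qv d
        * qpoch qv qv (2*k+d+1) * p1
      - qbinom qv (2*k+2*d+2) (d+1) * qpoch qv qv d * qpoch qv qv (2*k+d+1) * p2
  have := mul_right_cancel₀ (mul_ne_zero h7 h6) key
  linear_combination this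

lemma telescope (k d : ℕ) :
    Fterm (k + d + 1) k = Gterm (k + d + 1) k - Gterm (k + d + 1) (k + 1) := by
  simp only [Fterm, Gterm]
  have e1 : k + d + 1 - k = d + 1 := by omega
  have e2 : k + d + 1 - (k + 1) = d := by omega
  have e3 : k + d + 1 + k = 2 * k + d + 1 := by omega
  have e5 : k + d + 1 + (k + 1) = 2 * k + d + 1 + 1 := by omega
  have e6 : 2 * (k + d + 1) = 2 * k + 2 * d + 2 := by omega
  have e9 : (k + 1) * (k + 1 - 1) = k * (k - 1) + 2 * k := by
    cases k with
    | zero => rfl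
    | succ s => simp [Nat.succ_sub_one]; ring
  rw [e1, e2, e3, e5, e6, e9, qbinom_ratio k d]
  rw [qpoch_negq_succ (2 * k + d + 1)]
  rw [pow_add qv (k * (k - 1)) (2 * k)]
  simp only [qint]
  have h1 : (1 : Kq) - qv ^ (2 * k + d + 1 + 1) ≠ 0 := one_sub_qv_pow_ne_zero (by omega)
  have h3 : (1 : Kq) + qv ^ (2 * k + d + 1 + 1) ≠ 0 := one_add_qv_pow_ne_zero _
  have h5 : (1 : Kq) - qv ^ (2 * k + 2 * d + 2) ≠ 0 := one_sub_qv_pow_ne_zero (by omega)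
  have h8 := qpoch_negq_ne_zero (2 * k + d + 1)
  have h9 := qpoch_negq_ne_zero (d + 1)
  have h11 := one_sub_qv_ne_zero
  have hq : (1 : Kq) - qv ^ (2 * k + 1) ≠ 0 := one_sub_qv_pow_ne_zero (by omega)
  rw [qpoch_negq_succ d]
  rw [div_div_div_cancel_right₀]
  simp only [mul_div_assoc', div_mul_eq_mul_div, div_div]
  have h9d := qpoch_negq_ne_zero d
  have h4 : (1 : Kq) + qv ^ (d + 1) ≠ 0 := one_add_qv_pow_ne_zero _
  have hD1 : ((1 : Kq) - qv ^ (2 * k + d + 1 + 1)) *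
      (qpoch (-1 * qv) qv d * (1 + qv ^ (d + 1)) *
        (qpoch (-1 * qv) qv (2 * k + d + 1) * (1 + qv ^ (2 * k + d + 1 + 1)))) ≠ 0 := by
    exact mul_ne_zero h1 (mul_ne_zero (mul_ne_zero h9d h4) (mul_ne_zero h8 h3))
  have hD2 : ((1 : Kq) - qv ^ (2 * k + 2 * d + 2)) *
      (qpoch (-1 * qv) qv d * (1 + qv ^ (d + 1))) * qpoch (-1 * qv) qv (2 * k + d + 1) ≠ 0 := by
    exact mul_ne_zero (mul_ne_zero h5 (mul_ne_zero h9d h4)) h8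
  have hD3 : ((1 : Kq) - qv ^ (2 * k + d + 1 + 1)) *
      ((1 - qv ^ (2 * k + 2 * d + 2)) * qpoch (-1 * qv) qv d *
        (qpoch (-1 * qv) qv (2 * k + d + 1) * (1 + qv ^ (2 * k + d + 1 + 1)))) ≠ 0 := by
    exact mul_ne_zero h1 (mul_ne_zero (mul_ne_zero h5 h9d) (mul_ne_zero h8 h3))
  rw [div_sub_div _ _ hD2 hD3, div_eq_div_iff hD1 (mul_ne_zero hD2 hD3)]
  ring
  exact h11

lemma Gterm_zero (n : ℕ) : Gterm n 0 = 0 := by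
  simp [Gterm]

lemma Gterm_last (n : ℕ) (hn : n ≠ 0) : Fterm n n = Gterm n n := by
  simp only [Fterm, Gterm, Nat.sub_self, qpoch_zero]
  rw [show n + n + 1 = 2 * n + 1 by omega, show n + n = 2 * n by omega,
      qbinom_zero_right, qpoch_negq_succ (2 * n)]
  have h2 : (1 : Kq) + qv ^ (2 * n + 1) ≠ 0 := one_add_qv_pow_ne_zero _
  have h3 : (1 : Kq) - qv ^ (2 * n) ≠ 0 := one_sub_qv_pow_ne_zero (by omega)
  have h4 := qpoch_negq_ne_zero (2 * n)
  rw [div_self (qint_ne_zero (show 2 * n + 1 ≠ 0 by omega))]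
  rw [div_eq_div_iff (mul_ne_zero one_ne_zero_Kq (mul_ne_zero h4 h2))
    (mul_ne_zero (mul_ne_zero h3 one_ne_zero_Kq) h4)]
  ring

theorem final_test (n : ℕ) :
    ∑ k ∈ Finset.range (n + 1), Fterm n k = if n = 0 then 1 else 0 := by
  rcases Nat.eq_zero_or_pos n with rfl | hn
  · simp only [Finset.range_one, Finset.sum_singleton, if_pos rfl]
    have h2 := one_add_qv_pow_ne_zero 1
    rw [pow_one] at h2
    have e := qpoch_negq_succ 0
    norm_num [qpoch_zero] at e
    simp only [Fterm]
    norm_num [e, qpoch_zero, qbinom_zero_right]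
    have hq1 : qint 1 ≠ 0 := qint_ne_zero one_ne_zero
    rw [div_self hq1]
    simp only [one_mul, mul_one]
    exact div_self h2
  · rw [if_neg (by omega)]
    rw [Finset.sum_range_succ]
    have hs : ∀ k ∈ Finset.range n, Fterm n k = Gterm n k - Gterm n (k + 1) := by
      intro k hk
      rw [Finset.mem_range] at hk
      obtain ⟨d, rfl⟩ : ∃ d, n = k + d + 1 := ⟨n - k - 1, by omega⟩
      exact telescope k d
    rw [Finset.sum_congr rfl hs, Finset.sum_range_sub' (fun k => Gterm n k),
      Gterm_zero, Gterm_last n (by omega)]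
    ring

theorem super_catalan_stmt16 (n : ℕ) :
    ∑ k ∈ Finset.range (n + 1),
        (-1 : Kq) ^ k * qv ^ (k * (k - 1)) * qbinom qv (2 * n) (n - k)
          * (qint (2 * k + 1) / qint (n + k + 1)) * (1 + qv ^ (2 * k + 1))
          / (qpoch (-1 * qv) qv (n - k) * qpoch (-1 * qv) qv (n + k + 1))
      = if n = 0 then 1 else 0 := by
  show ∑ k ∈ Finset.range (n + 1), Fterm n k = if n = 0 then 1 else 0
  exact final_test n
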